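/- arXiv:2109.11516 — 5 statements merged into one kernel-verified Lean document; each statement's English description precedes it below -/
import Mathlib

section
/- For closed bounded intervals A and B and any λ ∈ [0,1], ((1−λ) ⊙ A ⊕ λ ⊙ B) ⊖_gH A = λ ⊙ (B ⊖_gH A). -/
theorem convexComb_gH_sub_general (a₁ a₂ b₁ b₂ l : ℝ) (hl0 : 0 ≤ l) :
    min (((1 - l) * a₁ + l * b₁) - a₁) (((1 - l) * a₂ + l * b₂) - a₂)
        = l * min (b₁ - a₁) (b₂ - a₂) ∧
      max (((1 - l) * a₁ + l * b₁) - a₁) (((1 - l) * a₂ + l * b₂) - a₂)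
        = l * max (b₁ - a₁) (b₂ - a₂) := by
  have h₁ : (1 - l) * a₁ + l * b₁ - a₁ = l * (b₁ - a₁) := by ring
  have h₂ : (1 - l) * a₂ + l * b₂ - a₂ = l * (b₂ - a₂) := by ring
  rw [h₁, h₂]
  exact ⟨(mul_min_of_nonneg _ _ hl0).symm, (mul_max_of_nonneg _ _ hl0).symm⟩

/-- ((1−λ) ⊙ A ⊕ λ ⊙ B) ⊖_gH A = λ ⊙ (B ⊖_gH A) for λ ∈ [0,1]. -/
theorem convexComb_gH_sub (a₁ a₂ b₁ b₂ l : ℝ) (ha : a₁ ≤ a₂) (hb : b₁ ≤ b₂)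
    (hl0 : 0 ≤ l) (hl1 : l ≤ 1) :
    min (((1 - l) * a₁ + l * b₁) - a₁) (((1 - l) * a₂ + l * b₂) - a₂)
        = l * min (b₁ - a₁) (b₂ - a₂) ∧
      max (((1 - l) * a₁ + l * b₁) - a₁) (((1 - l) * a₂ + l * b₂) - a₂)
        = l * max (b₁ - a₁) (b₂ - a₂) :=
  convexComb_gH_sub_general a₁ a₂ b₁ b₂ l hl0
end

section
/- Let S be a nonempty subset of I(ℝ)ⁿ. The support function ψ*_S(x) = sup_{Â∈S} xᵀ ⊙ Â is finite for every x ∈ ℝⁿ if and only if S is bounded, i.e., there exists M > 0 with ‖Â‖_{I(ℝ)ⁿ} ≤ M for all Â ∈ S. -/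
/-!
Testing the upper endpoint of the support function in the directions `±eᵢ` bounds `|aᵢ|` and
`|bᵢ|` uniformly on `S`, since `max |a| |b| = max (max a b) (max (-a) (-b))`; summing over `i`
bounds the norm. Conversely, both endpoints of `xᵀ ⊙ Â` are at most `(∑ |xᵢ|) ‖Â‖`.
-/

open Matrix

namespace EReal

variable {α : Type*} {S : Set α} {f : α → ℝ}

theorem sSup_image_coe_ne_top_iff :
    sSup ((fun a => (f a : EReal)) '' S) ≠ ⊤ ↔ BddAbove (f '' S) := by
  constructor
  · intro h
    obtain ⟨B, hsup, -⟩ := exists_between_coe_real (Ne.lt_top h)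
    refine ⟨B, Set.forall_mem_image.2 fun a ha => ?_⟩
    exact EReal.coe_le_coe_iff.1 ((le_sSup (Set.mem_image_of_mem _ ha)).trans hsup.le)
  · rintro ⟨B, hB⟩
    refine ne_top_of_le_ne_top (coe_ne_top B) (sSup_le ?_)
    rintro _ ⟨a, ha, rfl⟩
    exact EReal.coe_le_coe_iff.2 (hB (Set.mem_image_of_mem f ha))

theorem sSup_image_coe_ne_bot (hS : S.Nonempty) :
    sSup ((fun a => (f a : EReal)) '' S) ≠ ⊥ := by
  obtain ⟨a, ha⟩ := hS
  exact ne_bot_of_le_ne_bot (coe_ne_bot (f a)) (le_sSup (Set.mem_image_of_mem _ ha))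

end EReal

theorem max_abs_abs_eq {α : Type*} [AddCommGroup α] [LinearOrder α] [IsOrderedAddMonoid α]
    (a b : α) : max |a| |b| = max (max a b) (max (-a) (-b)) := by
  simp only [abs, max_assoc, max_left_comm]

section IntervalVector

variable {ι : Type*} [Fintype ι]

theorem abs_dotProduct_le_of_abs_le {x v : ι → ℝ} {M : ℝ} (hv : ∀ i, |v i| ≤ M) :
    |x ⬝ᵥ v| ≤ (∑ i, |x i|) * M :=
  calc |x ⬝ᵥ v| ≤ ∑ i, |x i * v i| := Finset.abs_sum_le_sum_abs _ _
    _ ≤ ∑ i, |x i| * M := Finset.sum_le_sum fun i _ => by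
        rw [abs_mul]; exact mul_le_mul_of_nonneg_left (hv i) (abs_nonneg _)
    _ = (∑ i, |x i|) * M := (Finset.sum_mul ..).symm

theorem max_dotProduct_le_of_sum_max_abs_le {x : ι → ℝ} {A : (ι → ℝ) × (ι → ℝ)} {M : ℝ}
    (hA : ∑ i, max |A.1 i| |A.2 i| ≤ M) :
    max (x ⬝ᵥ A.1) (x ⬝ᵥ A.2) ≤ (∑ i, |x i|) * M := by
  have hcoord : ∀ i, max |A.1 i| |A.2 i| ≤ M := fun i =>
    (Finset.single_le_sum (fun j _ => (abs_nonneg _).trans (le_max_left _ _))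
      (Finset.mem_univ i)).trans hA
  exact max_le
    ((le_abs_self _).trans (abs_dotProduct_le_of_abs_le fun i => (le_max_left _ _).trans (hcoord i)))
    ((le_abs_self _).trans (abs_dotProduct_le_of_abs_le fun i => (le_max_right _ _).trans (hcoord i)))

theorem max_abs_eq_max_single_dotProduct [DecidableEq ι] (A : (ι → ℝ) × (ι → ℝ)) (i : ι) :
    max |A.1 i| |A.2 i| =
      max (max (Pi.single i 1 ⬝ᵥ A.1) (Pi.single i 1 ⬝ᵥ A.2))
        (max (Pi.single i (-1) ⬝ᵥ A.1) (Pi.single i (-1) ⬝ᵥ A.2)) := by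
  simp only [single_dotProduct, one_mul, neg_one_mul, max_abs_abs_eq]

theorem exists_sum_max_abs_le_of_bddAbove {S : Set ((ι → ℝ) × (ι → ℝ))}
    (h : ∀ x : ι → ℝ, BddAbove ((fun A => max (x ⬝ᵥ A.1) (x ⬝ᵥ A.2)) '' S)) :
    ∃ M, ∀ A ∈ S, ∑ i, max |A.1 i| |A.2 i| ≤ M := by
  classical
  choose B hB using h
  refine ⟨∑ i, max (B (Pi.single i 1)) (B (Pi.single i (-1))), fun A hA => ?_⟩
  refine Finset.sum_le_sum fun i _ => ?_
  rw [max_abs_eq_max_single_dotProduct]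
  exact max_le_max (hB _ (Set.mem_image_of_mem _ hA)) (hB _ (Set.mem_image_of_mem _ hA))

end IntervalVector

theorem support_function_finite_iff_bounded_general {n : ℕ}
    (S : Set ((Fin n → ℝ) × (Fin n → ℝ))) (hS : S.Nonempty) :
    (∀ x : Fin n → ℝ,
        sSup ((fun A : (Fin n → ℝ) × (Fin n → ℝ) =>
          ((min (∑ i, x i * A.1 i) (∑ i, x i * A.2 i) : ℝ) : EReal)) '' S) ≠ ⊤ ∧
        sSup ((fun A : (Fin n → ℝ) × (Fin n → ℝ) =>
          ((min (∑ i, x i * A.1 i) (∑ i, x i * A.2 i) : ℝ) : EReal)) '' S) ≠ ⊥ ∧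
        sSup ((fun A : (Fin n → ℝ) × (Fin n → ℝ) =>
          ((max (∑ i, x i * A.1 i) (∑ i, x i * A.2 i) : ℝ) : EReal)) '' S) ≠ ⊤ ∧
        sSup ((fun A : (Fin n → ℝ) × (Fin n → ℝ) =>
          ((max (∑ i, x i * A.1 i) (∑ i, x i * A.2 i) : ℝ) : EReal)) '' S) ≠ ⊥) ↔
      ∃ M > (0 : ℝ), ∀ A ∈ S, (∑ i, max |A.1 i| |A.2 i|) ≤ M := by
  constructor
  · intro h
    obtain ⟨M, hM⟩ := exists_sum_max_abs_le_of_bddAbove (S := S) fun x =>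
      EReal.sSup_image_coe_ne_top_iff.1 (h x).2.2.1
    exact ⟨max M 1, by positivity, fun A hA => (hM A hA).trans (le_max_left _ _)⟩
  · rintro ⟨M, -, hM⟩ x
    have hmax : ∀ A ∈ S, max (x ⬝ᵥ A.1) (x ⬝ᵥ A.2) ≤ (∑ i, |x i|) * M := fun A hA =>
      max_dotProduct_le_of_sum_max_abs_le (hM A hA)
    have hmin : ∀ A ∈ S, min (x ⬝ᵥ A.1) (x ⬝ᵥ A.2) ≤ (∑ i, |x i|) * M := fun A hA =>
      min_le_max.trans (hmax A hA)
    exact ⟨EReal.sSup_image_coe_ne_top_iff.2 ⟨_, Set.forall_mem_image.2 hmin⟩,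
      EReal.sSup_image_coe_ne_bot hS,
      EReal.sSup_image_coe_ne_top_iff.2 ⟨_, Set.forall_mem_image.2 hmax⟩,
      EReal.sSup_image_coe_ne_bot hS⟩

/-- The support function of a nonempty set of interval vectors is finite everywhere
iff the set is bounded in the interval-vector norm. -/
theorem support_function_finite_iff_bounded {n : ℕ}
    (S : Set ((Fin n → ℝ) × (Fin n → ℝ))) (hS : S.Nonempty)
    (hval : ∀ A ∈ S, ∀ i, A.1 i ≤ A.2 i) :
    (∀ x : Fin n → ℝ,
        sSup ((fun A : (Fin n → ℝ) × (Fin n → ℝ) =>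
          ((min (∑ i, x i * A.1 i) (∑ i, x i * A.2 i) : ℝ) : EReal)) '' S) ≠ ⊤ ∧
        sSup ((fun A : (Fin n → ℝ) × (Fin n → ℝ) =>
          ((min (∑ i, x i * A.1 i) (∑ i, x i * A.2 i) : ℝ) : EReal)) '' S) ≠ ⊥ ∧
        sSup ((fun A : (Fin n → ℝ) × (Fin n → ℝ) =>
          ((max (∑ i, x i * A.1 i) (∑ i, x i * A.2 i) : ℝ) : EReal)) '' S) ≠ ⊤ ∧
        sSup ((fun A : (Fin n → ℝ) × (Fin n → ℝ) =>
          ((max (∑ i, x i * A.1 i) (∑ i, x i * A.2 i) : ℝ) : EReal)) '' S) ≠ ⊥) ↔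
      ∃ M > (0 : ℝ), ∀ A ∈ S, (∑ i, max |A.1 i| |A.2 i|) ≤ M :=
  support_function_finite_iff_bounded_general S hS
end

section
/- Let F = [F₁,F₂] be a proper convex interval-valued function on ℝⁿ and x̄ an interior point of dom(F). Then for every direction h, the gH-directional derivative equals the support function of the gH-subdifferential set: F_D(x̄)(h) = ψ*_{∂F(x̄)}(h). -/
/-!
For convex `f` and `x₀` in the interior of its domain, the one-sided directional derivative
`v ↦ f'(x₀; v)` exists, is positively homogeneous and convex, hence sublinear, and satisfies
`f'(x₀; x - x₀) ≤ f x - f x₀`. Hahn–Banach extends `c • h ↦ c * f'(x₀; h)` to a linear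
`g ≤ f'(x₀; ·)`, i.e. a subgradient with `g h = f'(x₀; h)`. The pair of such subgradients of
`F₁` and `F₂` is a gH-subgradient whose support values in direction `h` are exactly
`min D₁ D₂` and `max D₁ D₂`. Conversely, testing any gH-subgradient on the ray `x₀ + t • h`,
dividing by `t` and letting `t → 0⁺` bounds its support values by the same numbers.
-/

open Filter Set Topology

/-- The one-sided directional derivative `f'(x₀; v)` (junk value `0` where it does not exist). -/
noncomputable def rightLineDeriv {E : Type*} [AddCommGroup E] [Module ℝ E]
    (f : E → ℝ) (x₀ v : E) : ℝ :=
  derivWithin (fun t : ℝ => f (x₀ + t • v)) (Ioi 0) 0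

section Sublinear

variable {E : Type*} [AddCommGroup E] [Module ℝ E]

lemma exists_linearMap_eq_le_of_sublinear (N : E → ℝ)
    (N_hom : ∀ c : ℝ, 0 < c → ∀ x, N (c • x) = c * N x) (N_add : ∀ x y, N (x + y) ≤ N x + N y)
    (v : E) : ∃ g : E →ₗ[ℝ] ℝ, g v = N v ∧ ∀ x, g x ≤ N x := by
  have N_zero : N 0 = 0 := by
    have := N_hom 2 two_pos 0
    rw [smul_zero] at this
    linarith
  have hv : ∀ c : ℝ, c • v = 0 → c • N v = 0 := by
    intro c hc
    rcases smul_eq_zero.mp hc with rfl | rfl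
    · exact zero_smul ℝ _
    · rw [N_zero, smul_zero]
  have le_N : ∀ c : ℝ, c * N v ≤ N (c • v) := by
    intro c
    rcases lt_trichotomy c 0 with hc | rfl | hc
    · have hneg : 0 ≤ N v + N (-v) := by simpa [N_zero] using N_add v (-v)
      rw [← neg_neg c, neg_smul, ← smul_neg, N_hom _ (neg_pos.mpr hc)]
      nlinarith
    · simp [N_zero]
    · rw [N_hom c hc]
  obtain ⟨g, hg_ext, hg_le⟩ :=
    exists_extension_of_le_sublinear (LinearPMap.mkSpanSingleton' v (N v) hv) N N_hom N_add
      (by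
        rintro ⟨x, hx⟩
        obtain ⟨c, rfl⟩ := Submodule.mem_span_singleton.mp hx
        rw [LinearPMap.mkSpanSingleton'_apply]
        exact le_N c)
  refine ⟨g, ?_, hg_le⟩
  exact (hg_ext ⟨v, Submodule.mem_span_singleton_self v⟩).trans
    (LinearPMap.mkSpanSingleton'_apply_self _ _ _ _)

end Sublinear

section RightLineDeriv

variable {E : Type*} [AddCommGroup E] [Module ℝ E] {X : Set E} {f : E → ℝ} {x₀ x v : E}

lemma hasDerivWithinAt_Ioi_iff_tendsto_div {D : ℝ} :
    HasDerivWithinAt (fun t : ℝ => f (x₀ + t • v)) D (Ioi 0) 0 ↔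
      Tendsto (fun t : ℝ => (f (x₀ + t • v) - f x₀) / t) (𝓝[>] 0) (𝓝 D) := by
  rw [hasDerivWithinAt_iff_tendsto_slope' self_notMem_Ioi]
  exact tendsto_congr fun t => by simp [slope_def_field]

lemma rightLineDeriv_eq_of_tendsto {D : ℝ}
    (hD : Tendsto (fun t : ℝ => (f (x₀ + t • v) - f x₀) / t) (𝓝[>] 0) (𝓝 D)) :
    rightLineDeriv f x₀ v = D :=
  (hasDerivWithinAt_Ioi_iff_tendsto_div.mpr hD).derivWithin (uniqueDiffWithinAt_Ioi 0)

lemma ConvexOn.comp_add_smul (hf : ConvexOn ℝ X f) (x₀ v : E) :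
    ConvexOn ℝ {t : ℝ | x₀ + t • v ∈ X} (fun t => f (x₀ + t • v)) :=
  (hf.translate_right x₀).comp_linearMap (LinearMap.id.smulRight v)

variable [TopologicalSpace E] [ContinuousAdd E] [ContinuousSMul ℝ E]

lemma eventually_add_smul_mem_of_mem_interior (hx₀ : x₀ ∈ interior X) (v : E) :
    ∀ᶠ t : ℝ in 𝓝 0, x₀ + t • v ∈ X := by
  have hline : Tendsto (fun t : ℝ => x₀ + t • v) (𝓝 0) (𝓝 x₀) :=
    Continuous.tendsto' (by fun_prop) 0 x₀ (by simp)
  exact hline.eventually (mem_interior_iff_mem_nhds.mp hx₀)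

lemma ConvexOn.hasDerivWithinAt_rightLineDeriv (hf : ConvexOn ℝ X f) (hx₀ : x₀ ∈ interior X)
    (v : E) : HasDerivWithinAt (fun t : ℝ => f (x₀ + t • v)) (rightLineDeriv f x₀ v) (Ioi 0) 0 :=
  (hf.comp_add_smul x₀ v).hasDerivWithinAt_rightDeriv_of_mem_interior
    (mem_interior_iff_mem_nhds.mpr (eventually_add_smul_mem_of_mem_interior hx₀ v))

lemma ConvexOn.rightLineDeriv_sub_le (hf : ConvexOn ℝ X f) (hx₀ : x₀ ∈ interior X) (hx : x ∈ X) :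
    rightLineDeriv f x₀ (x - x₀) ≤ f x - f x₀ := by
  have hslope := (hf.comp_add_smul x₀ (x - x₀)).rightDeriv_le_slope_of_mem_interior
    (mem_interior_iff_mem_nhds.mpr (eventually_add_smul_mem_of_mem_interior hx₀ _))
    (y := 1) (by simpa using hx) one_pos
  simpa [slope_def_field, rightLineDeriv] using hslope

lemma ConvexOn.rightLineDeriv_smul (hf : ConvexOn ℝ X f) (hx₀ : x₀ ∈ interior X) {c : ℝ}
    (hc : 0 < c) (v : E) : rightLineDeriv f x₀ (c • v) = c * rightLineDeriv f x₀ v := by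
  have hscale : HasDerivWithinAt (fun t : ℝ => c * t) c (Ioi 0) 0 := by
    simpa using (hasDerivAt_id (0 : ℝ)).const_mul c |>.hasDerivWithinAt
  have hcomp := (hf.hasDerivWithinAt_rightLineDeriv hx₀ v).comp_of_eq 0 hscale
    (fun t (ht : 0 < t) => mul_pos hc ht) (mul_zero c).symm
  have hfun : ((fun t : ℝ => f (x₀ + t • v)) ∘ fun t => c * t) =
      fun t => f (x₀ + t • (c • v)) := by
    ext t
    simp [smul_smul, mul_comm]
  rw [hfun] at hcomp
  rw [mul_comm]
  exact hcomp.derivWithin (uniqueDiffWithinAt_Ioi 0)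

lemma ConvexOn.convexOn_rightLineDeriv (hf : ConvexOn ℝ X f) (hx₀ : x₀ ∈ interior X) :
    ConvexOn ℝ univ (rightLineDeriv f x₀) := by
  refine ⟨convex_univ, fun u _ w _ a b ha hb hab => ?_⟩
  have hlim : ∀ v, Tendsto (fun t : ℝ => (f (x₀ + t • v) - f x₀) / t) (𝓝[>] 0)
      (𝓝 (rightLineDeriv f x₀ v)) := fun v =>
    hasDerivWithinAt_Ioi_iff_tendsto_div.mp (hf.hasDerivWithinAt_rightLineDeriv hx₀ v)
  refine le_of_tendsto_of_tendsto (hlim _) (((hlim u).const_mul a).add ((hlim w).const_mul b)) ?_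
  filter_upwards [self_mem_nhdsWithin,
    nhdsWithin_le_nhds (eventually_add_smul_mem_of_mem_interior hx₀ u),
    nhdsWithin_le_nhds (eventually_add_smul_mem_of_mem_interior hx₀ w)] with t (ht : 0 < t) hu hw
  have hconv := hf.2 hu hw ha hb hab
  have hpt : a • (x₀ + t • u) + b • (x₀ + t • w) = x₀ + t • (a • u + b • w) :=
    calc a • (x₀ + t • u) + b • (x₀ + t • w) = (a + b) • x₀ + t • (a • u + b • w) := by module
      _ = x₀ + t • (a • u + b • w) := by rw [hab, one_smul]
  rw [hpt, smul_eq_mul, smul_eq_mul] at hconv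
  rw [mul_div_assoc', mul_div_assoc', ← add_div, div_le_div_iff_of_pos_right ht]
  linear_combination hconv + f x₀ * hab

lemma ConvexOn.rightLineDeriv_add_le (hf : ConvexOn ℝ X f) (hx₀ : x₀ ∈ interior X) (u v : E) :
    rightLineDeriv f x₀ (u + v) ≤ rightLineDeriv f x₀ u + rightLineDeriv f x₀ v := by
  have hmid := (hf.convexOn_rightLineDeriv hx₀).2 (mem_univ ((2 : ℝ) • u))
    (mem_univ ((2 : ℝ) • v)) (by norm_num : (0 : ℝ) ≤ 1 / 2) (by norm_num : (0 : ℝ) ≤ 1 / 2)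
    (by norm_num)
  have hsum : (1 / 2 : ℝ) • (2 : ℝ) • u + (1 / 2 : ℝ) • (2 : ℝ) • v = u + v := by module
  rw [hsum, hf.rightLineDeriv_smul hx₀ two_pos, hf.rightLineDeriv_smul hx₀ two_pos] at hmid
  simp only [smul_eq_mul] at hmid
  linarith

theorem ConvexOn.exists_subgradient_eq_rightLineDeriv (hf : ConvexOn ℝ X f)
    (hx₀ : x₀ ∈ interior X) (v : E) :
    ∃ g : E →ₗ[ℝ] ℝ, g v = rightLineDeriv f x₀ v ∧ ∀ x ∈ X, g (x - x₀) ≤ f x - f x₀ := by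
  obtain ⟨g, hgv, hg⟩ := exists_linearMap_eq_le_of_sublinear (rightLineDeriv f x₀)
    (fun _ hc w => hf.rightLineDeriv_smul hx₀ hc w) (hf.rightLineDeriv_add_le hx₀) v
  exact ⟨g, hgv, fun x hx => (hg _).trans (hf.rightLineDeriv_sub_le hx₀ hx)⟩

end RightLineDeriv

section GHSubgradient

variable {ι : Type*} [Fintype ι]

/-- `G = (G.1, G.2)` are the endpoint vectors of an interval vector `Ĝ`; the condition is
`(x - x₀)ᵀ ⊙ Ĝ ⪯ F(x) ⊖_gH F(x₀)` for `F = [F₁, F₂]`, written endpoint-wise. -/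
def IsGHSubgradient (X : Set (EuclideanSpace ℝ ι)) (F₁ F₂ : EuclideanSpace ℝ ι → ℝ)
    (x₀ : EuclideanSpace ℝ ι) (G : (ι → ℝ) × (ι → ℝ)) : Prop :=
  ∀ x ∈ X,
    min (∑ i, (x i - x₀ i) * G.1 i) (∑ i, (x i - x₀ i) * G.2 i) ≤
        min (F₁ x - F₁ x₀) (F₂ x - F₂ x₀) ∧
      max (∑ i, (x i - x₀ i) * G.1 i) (∑ i, (x i - x₀ i) * G.2 i) ≤
        max (F₁ x - F₁ x₀) (F₂ x - F₂ x₀)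

lemma EuclideanSpace.sum_mul_apply_single [DecidableEq ι] (g : EuclideanSpace ℝ ι →ₗ[ℝ] ℝ)
    (v : EuclideanSpace ℝ ι) : ∑ i, v i * g (EuclideanSpace.single i 1) = g v := by
  conv_rhs => rw [← (EuclideanSpace.basisFun ι ℝ).sum_repr v]
  simp [map_sum]

lemma sum_add_smul_sub_mul (x₀ h : EuclideanSpace ℝ ι) (t : ℝ) (c : ι → ℝ) :
    ∑ i, ((x₀ + t • h) i - x₀ i) * c i = t * ∑ i, h i * c i := by
  rw [Finset.mul_sum]
  refine Finset.sum_congr rfl fun i _ => ?_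
  simp only [PiLp.add_apply, PiLp.smul_apply, smul_eq_mul]
  ring

variable {X : Set (EuclideanSpace ℝ ι)} {F₁ F₂ : EuclideanSpace ℝ ι → ℝ} {x₀ : EuclideanSpace ℝ ι}
  {h : EuclideanSpace ℝ ι} {D₁ D₂ : ℝ} {G : (ι → ℝ) × (ι → ℝ)}

lemma isGHSubgradient_of_subgradients [DecidableEq ι] {g₁ g₂ : EuclideanSpace ℝ ι →ₗ[ℝ] ℝ}
    (hg₁ : ∀ x ∈ X, g₁ (x - x₀) ≤ F₁ x - F₁ x₀) (hg₂ : ∀ x ∈ X, g₂ (x - x₀) ≤ F₂ x - F₂ x₀) :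
    IsGHSubgradient X F₁ F₂ x₀
      (fun i => g₁ (EuclideanSpace.single i 1), fun i => g₂ (EuclideanSpace.single i 1)) := by
  intro x hx
  have hsum : ∀ g : EuclideanSpace ℝ ι →ₗ[ℝ] ℝ,
      ∑ i, (x i - x₀ i) * g (EuclideanSpace.single i 1) = g (x - x₀) := fun g =>
    EuclideanSpace.sum_mul_apply_single g (x - x₀)
  simp only [hsum]
  exact ⟨min_le_min (hg₁ x hx) (hg₂ x hx), max_le_max (hg₁ x hx) (hg₂ x hx)⟩

lemma IsGHSubgradient.min_le (hG : IsGHSubgradient X F₁ F₂ x₀ G) (hx₀ : x₀ ∈ interior X)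
    (hD₁ : Tendsto (fun t : ℝ => (F₁ (x₀ + t • h) - F₁ x₀) / t) (𝓝[>] 0) (𝓝 D₁))
    (hD₂ : Tendsto (fun t : ℝ => (F₂ (x₀ + t • h) - F₂ x₀) / t) (𝓝[>] 0) (𝓝 D₂)) :
    min (∑ i, h i * G.1 i) (∑ i, h i * G.2 i) ≤ min D₁ D₂ := by
  refine ge_of_tendsto (hD₁.min hD₂) ?_
  filter_upwards [self_mem_nhdsWithin,
    nhdsWithin_le_nhds (eventually_add_smul_mem_of_mem_interior hx₀ h)] with t (ht : 0 < t) hxt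
  have hray := (hG _ hxt).1
  rw [sum_add_smul_sub_mul, sum_add_smul_sub_mul, ← mul_min_of_nonneg _ _ ht.le] at hray
  rw [min_div_div_right ht.le, le_div_iff₀ ht, mul_comm]
  exact hray

lemma IsGHSubgradient.max_le (hG : IsGHSubgradient X F₁ F₂ x₀ G) (hx₀ : x₀ ∈ interior X)
    (hD₁ : Tendsto (fun t : ℝ => (F₁ (x₀ + t • h) - F₁ x₀) / t) (𝓝[>] 0) (𝓝 D₁))
    (hD₂ : Tendsto (fun t : ℝ => (F₂ (x₀ + t • h) - F₂ x₀) / t) (𝓝[>] 0) (𝓝 D₂)) :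
    max (∑ i, h i * G.1 i) (∑ i, h i * G.2 i) ≤ max D₁ D₂ := by
  refine ge_of_tendsto (hD₁.max hD₂) ?_
  filter_upwards [self_mem_nhdsWithin,
    nhdsWithin_le_nhds (eventually_add_smul_mem_of_mem_interior hx₀ h)] with t (ht : 0 < t) hxt
  have hray := (hG _ hxt).2
  rw [sum_add_smul_sub_mul, sum_add_smul_sub_mul, ← mul_max_of_nonneg _ _ ht.le] at hray
  rw [max_div_div_right ht.le, le_div_iff₀ ht, mul_comm]
  exact hray

end GHSubgradient

theorem gH_dirDeriv_eq_support_of_subdifferential_general {n : ℕ}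
    (X : Set (EuclideanSpace ℝ (Fin n)))
    (F₁ F₂ : EuclideanSpace ℝ (Fin n) → ℝ)
    (h₁ : ConvexOn ℝ X F₁) (h₂ : ConvexOn ℝ X F₂)
    (x₀ : EuclideanSpace ℝ (Fin n)) (hx₀ : x₀ ∈ interior X)
    (h : EuclideanSpace ℝ (Fin n)) (D₁ D₂ : ℝ)
    (hD₁ : Tendsto (fun t : ℝ => (F₁ (x₀ + t • h) - F₁ x₀) / t)
      (nhdsWithin 0 (Set.Ioi 0)) (nhds D₁))
    (hD₂ : Tendsto (fun t : ℝ => (F₂ (x₀ + t • h) - F₂ x₀) / t)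
      (nhdsWithin 0 (Set.Ioi 0)) (nhds D₂)) :
    min D₁ D₂ = sSup {r : ℝ | ∃ G : (Fin n → ℝ) × (Fin n → ℝ),
        (∀ x ∈ X,
          min (∑ i, (x i - x₀ i) * G.1 i) (∑ i, (x i - x₀ i) * G.2 i) ≤
              min (F₁ x - F₁ x₀) (F₂ x - F₂ x₀) ∧
            max (∑ i, (x i - x₀ i) * G.1 i) (∑ i, (x i - x₀ i) * G.2 i) ≤
              max (F₁ x - F₁ x₀) (F₂ x - F₂ x₀)) ∧
        r = min (∑ i, h i * G.1 i) (∑ i, h i * G.2 i)} ∧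
      max D₁ D₂ = sSup {r : ℝ | ∃ G : (Fin n → ℝ) × (Fin n → ℝ),
        (∀ x ∈ X,
          min (∑ i, (x i - x₀ i) * G.1 i) (∑ i, (x i - x₀ i) * G.2 i) ≤
              min (F₁ x - F₁ x₀) (F₂ x - F₂ x₀) ∧
            max (∑ i, (x i - x₀ i) * G.1 i) (∑ i, (x i - x₀ i) * G.2 i) ≤
              max (F₁ x - F₁ x₀) (F₂ x - F₂ x₀)) ∧
        r = max (∑ i, h i * G.1 i) (∑ i, h i * G.2 i)} := by
  obtain ⟨g₁, hg₁h, hg₁⟩ := h₁.exists_subgradient_eq_rightLineDeriv hx₀ h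
  obtain ⟨g₂, hg₂h, hg₂⟩ := h₂.exists_subgradient_eq_rightLineDeriv hx₀ h
  rw [rightLineDeriv_eq_of_tendsto hD₁] at hg₁h
  rw [rightLineDeriv_eq_of_tendsto hD₂] at hg₂h
  have hG := isGHSubgradient_of_subgradients hg₁ hg₂
  have hvalue : ∀ g : EuclideanSpace ℝ (Fin n) →ₗ[ℝ] ℝ,
      ∑ i, h i * g (EuclideanSpace.single i 1) = g h := fun g =>
    EuclideanSpace.sum_mul_apply_single g h
  constructor
  · refine (IsGreatest.csSup_eq ⟨?_, ?_⟩).symm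
    · exact ⟨_, hG, by simp only [hvalue, hg₁h, hg₂h]⟩
    · rintro _ ⟨G, hG', rfl⟩
      exact IsGHSubgradient.min_le hG' hx₀ hD₁ hD₂
  · refine (IsGreatest.csSup_eq ⟨?_, ?_⟩).symm
    · exact ⟨_, hG, by simp only [hvalue, hg₁h, hg₂h]⟩
    · rintro _ ⟨G, hG', rfl⟩
      exact IsGHSubgradient.max_le hG' hx₀ hD₁ hD₂

/-- The gH-directional derivative of F at an interior point equals the support
function of the gH-subdifferential set. -/
theorem gH_dirDeriv_eq_support_of_subdifferential {n : ℕ}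
    (X : Set (EuclideanSpace ℝ (Fin n))) (hXc : Convex ℝ X)
    (F₁ F₂ : EuclideanSpace ℝ (Fin n) → ℝ)
    (h₁ : ConvexOn ℝ X F₁) (h₂ : ConvexOn ℝ X F₂) (hle : ∀ x ∈ X, F₁ x ≤ F₂ x)
    (x₀ : EuclideanSpace ℝ (Fin n)) (hx₀ : x₀ ∈ interior X)
    (h : EuclideanSpace ℝ (Fin n)) (D₁ D₂ : ℝ)
    (hD₁ : Tendsto (fun t : ℝ => (F₁ (x₀ + t • h) - F₁ x₀) / t)
      (nhdsWithin 0 (Set.Ioi 0)) (nhds D₁))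
    (hD₂ : Tendsto (fun t : ℝ => (F₂ (x₀ + t • h) - F₂ x₀) / t)
      (nhdsWithin 0 (Set.Ioi 0)) (nhds D₂)) :
    min D₁ D₂ = sSup {r : ℝ | ∃ G : (Fin n → ℝ) × (Fin n → ℝ),
        (∀ x ∈ X,
          min (∑ i, (x i - x₀ i) * G.1 i) (∑ i, (x i - x₀ i) * G.2 i) ≤
              min (F₁ x - F₁ x₀) (F₂ x - F₂ x₀) ∧
            max (∑ i, (x i - x₀ i) * G.1 i) (∑ i, (x i - x₀ i) * G.2 i) ≤
              max (F₁ x - F₁ x₀) (F₂ x - F₂ x₀)) ∧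
        r = min (∑ i, h i * G.1 i) (∑ i, h i * G.2 i)} ∧
      max D₁ D₂ = sSup {r : ℝ | ∃ G : (Fin n → ℝ) × (Fin n → ℝ),
        (∀ x ∈ X,
          min (∑ i, (x i - x₀ i) * G.1 i) (∑ i, (x i - x₀ i) * G.2 i) ≤
              min (F₁ x - F₁ x₀) (F₂ x - F₂ x₀) ∧
            max (∑ i, (x i - x₀ i) * G.1 i) (∑ i, (x i - x₀ i) * G.2 i) ≤
              max (F₁ x - F₁ x₀) (F₂ x - F₂ x₀)) ∧
        r = max (∑ i, h i * G.1 i) (∑ i, h i * G.2 i)} :=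
  gH_dirDeriv_eq_support_of_subdifferential_general X F₁ F₂ h₁ h₂ x₀ hx₀ h D₁ D₂ hD₁ hD₂
end

section
/- Let F be a proper convex interval-valued function on ℝⁿ and x̄ an interior point of dom(F). Then the gH-subdifferential set ∂F(x̄) is bounded: there exists M > 0 such that ‖Ĝ‖_{I(ℝ)ⁿ} ≤ M for all Ĝ ∈ ∂F(x̄). -/
/-!
Both endpoint vectors `g` of a gH-subgradient satisfy `∑ i, (x i - x₀ i) * g i ≤ Φ x` on `X`, where
`Φ x = max (F₁ x - F₁ x₀) (F₂ x - F₂ x₀)`. Testing this at the `2 n` points `x₀ ± r eᵢ` of a ball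
around `x₀` inside `X` bounds each `|g i|` by `max (Φ (x₀ + r eᵢ)) (Φ (x₀ - r eᵢ)) / r`.
-/

open Finset

section

variable {ι : Type*} [Fintype ι] [DecidableEq ι]

lemma sum_sub_mul_add_single (x₀ : EuclideanSpace ℝ ι) (i : ι) (t : ℝ)
    (g : ι → ℝ) : ∑ j, ((x₀ + EuclideanSpace.single i t) j - x₀ j) * g j = t * g i := by
  simp [PiLp.single_apply, ite_mul]

lemma add_single_mem_ball (x₀ : EuclideanSpace ℝ ι) (i : ι) {t δ : ℝ}
    (ht : |t| < δ) : x₀ + EuclideanSpace.single i t ∈ Metric.ball x₀ δ := by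
  simpa [dist_eq_norm] using ht

lemma abs_le_max_div_of_mul_le {r a b c : ℝ} (hr : 0 < r) (hb : r * a ≤ b) (hc : -(r * a) ≤ c) :
    |a| ≤ max b c / r := by
  rw [le_div_iff₀ hr]
  calc |a| * r = max (r * a) (-(r * a)) := by
        rw [← abs_eq_max_neg, abs_mul, abs_of_pos hr, mul_comm]
    _ ≤ max b c := max_le_max hb hc

lemma exists_sum_abs_le_of_forall_sum_sub_mul_le {X : Set (EuclideanSpace ℝ ι)}
    {x₀ : EuclideanSpace ℝ ι} (hx₀ : x₀ ∈ interior X) (Φ : EuclideanSpace ℝ ι → ℝ) :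
    ∃ M, ∀ g : ι → ℝ, (∀ x ∈ X, ∑ i, (x i - x₀ i) * g i ≤ Φ x) → ∑ i, |g i| ≤ M := by
  obtain ⟨δ, hδ, hball⟩ := Metric.isOpen_iff.mp isOpen_interior x₀ hx₀
  have hr : 0 < δ / 2 := half_pos hδ
  have hmem : ∀ i (t : ℝ), |t| = δ / 2 → x₀ + EuclideanSpace.single i t ∈ X := fun i t ht =>
    interior_subset (hball (add_single_mem_ball x₀ i (by linarith)))
  set p : ι → ℝ := fun i => Φ (x₀ + EuclideanSpace.single i (δ / 2))
  set m : ι → ℝ := fun i => Φ (x₀ + EuclideanSpace.single i (-(δ / 2)))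
  refine ⟨∑ i, max (p i) (m i) / (δ / 2), fun g hg => sum_le_sum fun i _ => ?_⟩
  have hp := hg _ (hmem i (δ / 2) (abs_of_pos hr))
  have hm := hg _ (hmem i (-(δ / 2)) (by rw [abs_neg, abs_of_pos hr]))
  rw [sum_sub_mul_add_single] at hp hm
  exact abs_le_max_div_of_mul_le hr hp (by simpa using hm)

end

theorem gH_subdifferential_bounded_general {n : ℕ}
    (X : Set (EuclideanSpace ℝ (Fin n)))
    (F₁ F₂ : EuclideanSpace ℝ (Fin n) → ℝ)
    (x₀ : EuclideanSpace ℝ (Fin n)) (hx₀ : x₀ ∈ interior X) :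
    ∃ M > (0 : ℝ), ∀ G : (Fin n → ℝ) × (Fin n → ℝ), (∀ i, G.1 i ≤ G.2 i) →
      (∀ x ∈ X,
        min (∑ i, (x i - x₀ i) * G.1 i) (∑ i, (x i - x₀ i) * G.2 i) ≤
            min (F₁ x - F₁ x₀) (F₂ x - F₂ x₀) ∧
          max (∑ i, (x i - x₀ i) * G.1 i) (∑ i, (x i - x₀ i) * G.2 i) ≤
            max (F₁ x - F₁ x₀) (F₂ x - F₂ x₀)) →
      (∑ i, max |G.1 i| |G.2 i|) ≤ M := by
  obtain ⟨M, hM⟩ :=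
    exists_sum_abs_le_of_forall_sum_sub_mul_le hx₀ fun x => max (F₁ x - F₁ x₀) (F₂ x - F₂ x₀)
  refine ⟨2 * max M 1, by positivity, fun G _ hG => ?_⟩
  have h₁ := hM G.1 fun x hx => (le_max_left _ _).trans (hG x hx).2
  have h₂ := hM G.2 fun x hx => (le_max_right _ _).trans (hG x hx).2
  calc ∑ i, max |G.1 i| |G.2 i| ≤ ∑ i, (|G.1 i| + |G.2 i|) :=
        sum_le_sum fun i _ => max_le_add_of_nonneg (abs_nonneg _) (abs_nonneg _)
    _ = ∑ i, |G.1 i| + ∑ i, |G.2 i| := sum_add_distrib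
    _ ≤ 2 * max M 1 := by linarith [le_max_left M 1]

/-- The gH-subdifferential set at an interior point of the domain is bounded. -/
theorem gH_subdifferential_bounded {n : ℕ}
    (X : Set (EuclideanSpace ℝ (Fin n))) (hXc : Convex ℝ X)
    (F₁ F₂ : EuclideanSpace ℝ (Fin n) → ℝ)
    (h₁ : ConvexOn ℝ X F₁) (h₂ : ConvexOn ℝ X F₂) (hle : ∀ x ∈ X, F₁ x ≤ F₂ x)
    (x₀ : EuclideanSpace ℝ (Fin n)) (hx₀ : x₀ ∈ interior X) :
    ∃ M > (0 : ℝ), ∀ G : (Fin n → ℝ) × (Fin n → ℝ), (∀ i, G.1 i ≤ G.2 i) →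
      (∀ x ∈ X,
        min (∑ i, (x i - x₀ i) * G.1 i) (∑ i, (x i - x₀ i) * G.2 i) ≤
            min (F₁ x - F₁ x₀) (F₂ x - F₂ x₀) ∧
          max (∑ i, (x i - x₀ i) * G.1 i) (∑ i, (x i - x₀ i) * G.2 i) ≤
            max (F₁ x - F₁ x₀) (F₂ x - F₂ x₀)) →
      (∑ i, max |G.1 i| |G.2 i|) ≤ M :=
  gH_subdifferential_bounded_general X F₁ F₂ x₀ hx₀
end

section
/- Let X ⊆ ℝⁿ be nonempty convex and F a convex interval-valued function on X such that at every x ∈ X there exists a gH-subgradient Ĝₓ ∈ ∂F(x), and suppose there is M > 0 bounding ‖Ĝₓ‖_{I(ℝ)ⁿ} ≤ M uniformly. Then F is gH-Lipschitz continuous on X with constant M: ‖F(x) ⊖_gH F(y)‖_{I(ℝ)} ≤ M‖x−y‖ for all x, y ∈ X. -/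
/-!
Apply the gH-subgradient inequality at `y` in the direction `x - y`. The lower endpoint of
`(x - y)ᵀ ⊙ Ĝ_y` is at least `-M ‖x - y‖` and at most both endpoint differences
`F₁ x - F₁ y` and `F₂ x - F₂ y`. Exchanging `x` and `y` bounds these differences from above,
so `|Fⱼ x - Fⱼ y| ≤ M ‖x - y‖` for `j = 1, 2`, and the endpoints of `F x ⊖_gH F y` are among
these two numbers.
-/

open Finset

lemma abs_sum_mul_le_sum_mul_norm {ι : Type*} [Fintype ι] (v : EuclideanSpace ℝ ι)
    (g B : ι → ℝ) (hgB : ∀ i, |g i| ≤ B i) :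
    |∑ i, v i * g i| ≤ (∑ i, B i) * ‖v‖ :=
  calc |∑ i, v i * g i| ≤ ∑ i, |v i * g i| := abs_sum_le_sum_abs _ _
    _ ≤ ∑ i, B i * ‖v‖ := by
        refine sum_le_sum fun i _ => ?_
        rw [abs_mul, mul_comm]
        exact mul_le_mul (hgB i) (PiLp.norm_apply_le v i) (abs_nonneg _)
          ((abs_nonneg _).trans (hgB i))
    _ = (∑ i, B i) * ‖v‖ := (sum_mul _ _ _).symm

lemma neg_mul_norm_le_min_sum_mul {ι : Type*} [Fintype ι] (v : EuclideanSpace ℝ ι)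
    (g₁ g₂ : ι → ℝ) {M : ℝ} (hM : ∑ i, max |g₁ i| |g₂ i| ≤ M) :
    -(M * ‖v‖) ≤ min (∑ i, v i * g₁ i) (∑ i, v i * g₂ i) := by
  have hbound : ∀ g : ι → ℝ, (∀ i, |g i| ≤ max |g₁ i| |g₂ i|) →
      -(M * ‖v‖) ≤ ∑ i, v i * g i := fun g hg =>
    neg_le_of_abs_le <| (abs_sum_mul_le_sum_mul_norm v g _ hg).trans
      (mul_le_mul_of_nonneg_right hM (norm_nonneg v))
  exact le_min (hbound g₁ fun i => le_max_left _ _) (hbound g₂ fun i => le_max_right _ _)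

lemma max_abs_min_abs_max_le {a b c : ℝ} (ha : |a| ≤ c) (hb : |b| ≤ c) :
    max |min a b| |max a b| ≤ c :=
  max_le (abs_min_le_max_abs_abs.trans (max_le ha hb))
    (abs_max_le_max_abs_abs.trans (max_le ha hb))

theorem gH_lipschitz_of_bounded_subgradients_general {n : ℕ}
    (X : Set (EuclideanSpace ℝ (Fin n)))
    (F₁ F₂ : EuclideanSpace ℝ (Fin n) → ℝ)
    (M : ℝ)
    (hsub : ∀ x ∈ X, ∃ G : (Fin n → ℝ) × (Fin n → ℝ),
      (∀ i, G.1 i ≤ G.2 i) ∧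
      (∀ y ∈ X,
        min (∑ i, (y i - x i) * G.1 i) (∑ i, (y i - x i) * G.2 i) ≤
            min (F₁ y - F₁ x) (F₂ y - F₂ x) ∧
          max (∑ i, (y i - x i) * G.1 i) (∑ i, (y i - x i) * G.2 i) ≤
            max (F₁ y - F₁ x) (F₂ y - F₂ x)) ∧
      (∑ i, max |G.1 i| |G.2 i|) ≤ M) :
    ∀ x ∈ X, ∀ y ∈ X,
      max |min (F₁ x - F₁ y) (F₂ x - F₂ y)| |max (F₁ x - F₁ y) (F₂ x - F₂ y)| ≤
        M * ‖x - y‖ := by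
  have lower : ∀ x ∈ X, ∀ y ∈ X,
      -(M * ‖x - y‖) ≤ F₁ x - F₁ y ∧ -(M * ‖x - y‖) ≤ F₂ x - F₂ y := by
    intro x hx y hy
    obtain ⟨G, -, hG, hGM⟩ := hsub y hy
    have h := (neg_mul_norm_le_min_sum_mul (x - y) G.1 G.2 hGM).trans (hG x hx).1
    exact ⟨h.trans (min_le_left _ _), h.trans (min_le_right _ _)⟩
  intro x hx y hy
  obtain ⟨h₁xy, h₂xy⟩ := lower x hx y hy
  obtain ⟨h₁yx, h₂yx⟩ := lower y hy x hx
  rw [norm_sub_rev] at h₁yx h₂yx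
  exact max_abs_min_abs_max_le (abs_sub_le_iff.2 ⟨by linarith, by linarith⟩)
    (abs_sub_le_iff.2 ⟨by linarith, by linarith⟩)

/-- A convex interval-valued function with uniformly bounded gH-subgradients at
every point is gH-Lipschitz continuous. -/
theorem gH_lipschitz_of_bounded_subgradients {n : ℕ}
    (X : Set (EuclideanSpace ℝ (Fin n))) (hXne : X.Nonempty) (hXc : Convex ℝ X)
    (F₁ F₂ : EuclideanSpace ℝ (Fin n) → ℝ)
    (h₁ : ConvexOn ℝ X F₁) (h₂ : ConvexOn ℝ X F₂) (hle : ∀ x ∈ X, F₁ x ≤ F₂ x)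
    (M : ℝ) (hM : 0 < M)
    (hsub : ∀ x ∈ X, ∃ G : (Fin n → ℝ) × (Fin n → ℝ),
      (∀ i, G.1 i ≤ G.2 i) ∧
      (∀ y ∈ X,
        min (∑ i, (y i - x i) * G.1 i) (∑ i, (y i - x i) * G.2 i) ≤
            min (F₁ y - F₁ x) (F₂ y - F₂ x) ∧
          max (∑ i, (y i - x i) * G.1 i) (∑ i, (y i - x i) * G.2 i) ≤
            max (F₁ y - F₁ x) (F₂ y - F₂ x)) ∧
      (∑ i, max |G.1 i| |G.2 i|) ≤ M) :
    ∀ x ∈ X, ∀ y ∈ X,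
      max |min (F₁ x - F₁ y) (F₂ x - F₂ y)| |max (F₁ x - F₁ y) (F₂ x - F₂ y)| ≤
        M * ‖x - y‖ :=
  gH_lipschitz_of_bounded_subgradients_general X F₁ F₂ M hsub
end
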